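/- Let (X, 𝒳) be a measurable space with a σ-finite measure λ, let d ≥ 1, and let g : X^d → ℝ be square integrable with respect to λ^{⊗d}. Let λ' be the product of λ with Lebesgue measure restricted to [0,1], a measure on X × [0,1], and let Q : (X × [0,1])^d → X^d be the coordinate projection Q((x_1,t_1),…,(x_d,t_d)) = (x_1,…,x_d). Then { ∫_{X^d} g(x) · ∏_{k=1}^d φ(x_k) dλ^{⊗d}(x) : φ : X → ℝ measurable, ∫_X φ^2 dλ ≤ 1 } = { ∫_{(X×[0,1])^d} g(Q(z)) · ∏_{k=1}^d ψ(z_k) d(λ')^{⊗d}(z) : ψ : X × [0,1] → ℝ measurable, ∫_{X×[0,1]} ψ^2 dλ' ≤ 1 }, as subsets of ℝ. -/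

import Mathlib

open MeasureTheory ENNReal

/-!
A test function `φ` on `X` gives the test function `φ ∘ Prod.fst` on `X × [0,1]` with the same
`L²` norm and the same integral, since Lebesgue measure on `[0,1]` is a probability measure.
Conversely, a test function `ψ` on `X × [0,1]` is replaced by its average `φ x = ∫ ψ (x, t) dt`
over the marks: Jensen's inequality keeps `‖φ‖₂ ≤ ‖ψ‖₂`, and since `g ∘ Q` does not depend on the
marks, Fubini's theorem integrates them out of `∏ ψ (z k)` factor by factor, leaving `∏ φ (x k)`.
-/

section L2

variable {α : Type*} [MeasurableSpace α] {μ : Measure α}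

lemma ENNReal.ofReal_sq_eq_enorm_sq (a : ℝ) : ENNReal.ofReal (a ^ 2) = ‖a‖ₑ ^ 2 := by
  rw [← Real.enorm_eq_ofReal (sq_nonneg a), enorm_pow]

lemma eLpNorm_two_sq_eq_lintegral_ofReal_sq (f : α → ℝ) :
    eLpNorm f 2 μ ^ 2 = ∫⁻ x, ENNReal.ofReal (f x ^ 2) ∂μ := by
  simpa [ENNReal.ofReal_sq_eq_enorm_sq] using
    eLpNorm_nnreal_pow_eq_lintegral (f := f) (μ := μ) (p := 2) two_ne_zero

lemma memLp_two_of_lintegral_ofReal_sq_ne_top {f : α → ℝ} (hf : AEStronglyMeasurable f μ)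
    (h : ∫⁻ x, ENNReal.ofReal (f x ^ 2) ∂μ ≠ ∞) : MemLp f 2 μ := by
  refine ⟨hf, lt_top_iff_ne_top.2 fun htop => h ?_⟩
  rw [← eLpNorm_two_sq_eq_lintegral_ofReal_sq, htop, top_pow two_ne_zero]

lemma ofReal_sq_integral_le_lintegral_ofReal_sq [IsProbabilityMeasure μ] {f : α → ℝ}
    (hf : AEStronglyMeasurable f μ) :
    ENNReal.ofReal ((∫ x, f x ∂μ) ^ 2) ≤ ∫⁻ x, ENNReal.ofReal (f x ^ 2) ∂μ := by
  rw [ENNReal.ofReal_sq_eq_enorm_sq, ← eLpNorm_two_sq_eq_lintegral_ofReal_sq]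
  gcongr
  calc ‖∫ x, f x ∂μ‖ₑ ≤ eLpNorm f 1 μ := by
        rw [eLpNorm_one_eq_lintegral_enorm]
        exact enorm_integral_le_lintegral_enorm f
    _ ≤ eLpNorm f 2 μ := eLpNorm_le_eLpNorm_of_exponent_le one_le_two hf

lemma MeasureTheory.MemLp.fintype_prod {ι E : Type*} [Fintype ι] [MeasurableSpace E]
    {μ : ι → Measure E} [∀ i, SigmaFinite (μ i)] {f : ι → E → ℝ} (hf : ∀ i, MemLp (f i) 2 (μ i)) :
    MemLp (fun x : ι → E => ∏ i, f i (x i)) 2 (Measure.pi μ) := by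
  refine (memLp_two_iff_integrable_sq (Finset.aestronglyMeasurable_fun_prod _ fun i _ =>
    (hf i).1.comp_quasiMeasurePreserving (Measure.quasiMeasurePreserving_eval _ i))).2 ?_
  simp_rw [← Finset.prod_pow]
  exact Integrable.fintype_prod fun i => (hf i).integrable_sq

end L2

theorem MeasureTheory.MeasurePreserving.integral_comp_of_aestronglyMeasurable
    {α β E : Type*} [MeasurableSpace α] [MeasurableSpace β] [NormedAddCommGroup E]
    [NormedSpace ℝ E] {μ : Measure α} {ν : Measure β} {f : α → β}
    (hf : MeasurePreserving f μ ν) {g : β → E} (hg : AEStronglyMeasurable g ν) :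
    ∫ x, g (f x) ∂μ = ∫ y, g y ∂ν := by
  rw [← hf.map_eq] at hg ⊢
  exact (integral_map hf.aemeasurable hg).symm

section Marking

variable {X Y ι : Type*} [MeasurableSpace X] [MeasurableSpace Y] [Fintype ι]
  {μ : Measure X} {ν : Measure Y} [IsProbabilityMeasure ν]

lemma measurePreserving_pi_fst [SigmaFinite μ] :
    MeasurePreserving (fun (z : ι → X × Y) i => (z i).1)
      (Measure.pi fun _ => μ.prod ν) (Measure.pi fun _ => μ) :=
  measurePreserving_pi _ _ fun _ => measurePreserving_fst

lemma lintegral_ofReal_sq_integral_le {ψ : X × Y → ℝ} (hψ : Measurable ψ) :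
    ∫⁻ x, ENNReal.ofReal ((∫ t, ψ (x, t) ∂ν) ^ 2) ∂μ ≤
      ∫⁻ z, ENNReal.ofReal (ψ z ^ 2) ∂(μ.prod ν) := by
  rw [lintegral_prod _ (by fun_prop)]
  exact lintegral_mono fun x =>
    ofReal_sq_integral_le_lintegral_ofReal_sq (hψ.comp measurable_prodMk_left).aestronglyMeasurable

lemma integral_comp_pi_fst_mul_prod [SigmaFinite μ] {g : (ι → X) → ℝ}
    (hg : MemLp g 2 (Measure.pi fun _ => μ)) {ψ : X × Y → ℝ} (hψ : MemLp ψ 2 (μ.prod ν)) :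
    ∫ z : ι → X × Y, g (fun i => (z i).1) * ∏ k, ψ (z k) ∂(Measure.pi fun _ => μ.prod ν) =
      ∫ x : ι → X, g x * ∏ k, ∫ t, ψ (x k, t) ∂ν ∂(Measure.pi fun _ => μ) := by
  have hint : Integrable (fun z : ι → X × Y => g (fun i => (z i).1) * ∏ k, ψ (z k))
      (Measure.pi fun _ => μ.prod ν) :=
    (hg.comp_measurePreserving measurePreserving_pi_fst).integrable_mul
      (MemLp.fintype_prod fun _ => hψ)
  have hsplit := (measurePreserving_arrowProdEquivProdArrow X Y ι (fun _ => μ) (fun _ => ν)).symm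
  have hint_split : Integrable (fun p : (ι → X) × (ι → Y) => g p.1 * ∏ k, ψ (p.1 k, p.2 k))
      ((Measure.pi fun _ => μ).prod (Measure.pi fun _ => ν)) :=
    (hsplit.integrable_comp_emb (MeasurableEquiv.measurableEmbedding _)).2 hint
  rw [← hsplit.integral_comp' (fun z => g (fun i => (z i).1) * ∏ k, ψ (z k))]
  change ∫ p : (ι → X) × (ι → Y), g p.1 * ∏ k, ψ (p.1 k, p.2 k) ∂_ = _
  rw [integral_prod _ hint_split]
  congr 1 with x
  exact (integral_const_mul (g x) _).trans
    (congrArg _ (integral_fintype_prod_eq_prod fun k t => ψ (x k, t)))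

end Marking

theorem stmt_15 {X : Type*} [MeasurableSpace X] (μ : Measure X) [SigmaFinite μ]
    (d : ℕ) (g : (Fin d → X) → ℝ)
    (hg : MemLp g 2 (Measure.pi fun _ : Fin d => μ)) :
    {c : ℝ | ∃ φ : X → ℝ, Measurable φ ∧
      (∫⁻ x, ENNReal.ofReal (φ x ^ 2) ∂μ) ≤ 1 ∧
      c = ∫ x : Fin d → X, g x * ∏ k : Fin d, φ (x k)
            ∂(Measure.pi fun _ : Fin d => μ)} =
    {c : ℝ | ∃ ψ : X × ℝ → ℝ, Measurable ψ ∧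
      (∫⁻ z, ENNReal.ofReal (ψ z ^ 2)
          ∂(μ.prod ((volume : Measure ℝ).restrict (Set.Icc 0 1)))) ≤ 1 ∧
      c = ∫ z : Fin d → X × ℝ, g (fun i => (z i).1) * ∏ k : Fin d, ψ (z k)
            ∂(Measure.pi fun _ : Fin d =>
                μ.prod ((volume : Measure ℝ).restrict (Set.Icc 0 1)))} := by
  have : IsProbabilityMeasure ((volume : Measure ℝ).restrict (Set.Icc 0 1)) :=
    ⟨by simp⟩
  ext c
  constructor
  · rintro ⟨φ, hφ, hφ_sq, rfl⟩
    refine ⟨fun z => φ z.1, hφ.comp measurable_fst, ?_, ?_⟩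
    · rwa [measurePreserving_fst.lintegral_comp (f := fun x => ENNReal.ofReal (φ x ^ 2))
        (by fun_prop)]
    · have hφ_prod : Measurable fun x : Fin d → X => ∏ k, φ (x k) := by fun_prop
      exact (measurePreserving_pi_fst.integral_comp_of_aestronglyMeasurable
        (hg.1.mul hφ_prod.aestronglyMeasurable)).symm
  · rintro ⟨ψ, hψ, hψ_sq, rfl⟩
    have hψ_L2 := memLp_two_of_lintegral_ofReal_sq_ne_top hψ.aestronglyMeasurable
      (ne_top_of_le_ne_top one_ne_top hψ_sq)
    exact ⟨fun x => ∫ t, ψ (x, t) ∂(volume.restrict (Set.Icc 0 1)),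
      hψ.stronglyMeasurable.integral_prod_right'.measurable,
      (lintegral_ofReal_sq_integral_le hψ).trans hψ_sq,
      integral_comp_pi_fst_mul_prod hg hψ_L2⟩
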